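/- arXiv:1309.6697 — 2 statements merged into one kernel-verified Lean document; each statement's English description precedes it below -/
import Mathlib

section
/- For every dimension d ≥ 1 and every vector x ∈ ℝ^d, the integral ∫_{ℝ^d} (1 - cos(uᵀx)) / (c_d |u|^{d+1}) du equals |x|, where |·| is the Euclidean norm and c_d = π^{(1+d)/2} / Γ((1+d)/2). -/
/-!
Subordination to Gaussians: in dimension `n`, with `P = (n + 1) / 2`,
`‖u‖^(-(n+1)) = Γ(P)⁻¹ ∫₀^∞ t^(P-1) exp(-t‖u‖²) dt`. The integrand being nonnegative, Tonelli lets us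
integrate in `u` first, and the Fourier transform of a Gaussian gives
`∫ (1 - cos⟪u, x⟫) exp(-t‖u‖²) du = (π/t)^(n/2) (1 - exp(-‖x‖²/(4t)))`. What remains is
`∫₀^∞ t^(-1/2) (1 - exp(-a/t)) dt = 2√(πa)` with `a = ‖x‖²/4`; writing
`1 - exp(-a/t) = ∫₀^a t⁻¹ exp(-b/t) db` and applying Tonelli once more turns it into
`∫₀^a Γ(1/2) b^(-1/2) db`, the inner `t`-integral being a Gamma integral after `t ↦ 1/t`.
-/

open Real MeasureTheory Set Filter
open scoped RealInnerProductSpace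

section Tonelli

variable {α β : Type*} [MeasurableSpace α] [MeasurableSpace β] {μ : Measure α} {ν : Measure β}
  [SFinite ν] {F : α → β → ℝ}

theorem integral_integral_eq_toReal_lintegral_prod
    (hF : AEStronglyMeasurable (Function.uncurry F) (μ.prod ν))
    (hF0 : ∀ᵐ x ∂μ, 0 ≤ᵐ[ν] F x) (hFint : ∀ᵐ x ∂μ, Integrable (F x) ν) :
    ∫ x, ∫ y, F x y ∂ν ∂μ = (∫⁻ z, ENNReal.ofReal (Function.uncurry F z) ∂μ.prod ν).toReal := by
  rw [integral_eq_lintegral_of_nonneg_ae (hF0.mono fun x hx => integral_nonneg_of_ae hx)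
    hF.integral_prod_right', lintegral_prod _ hF.aemeasurable.ennreal_ofReal]
  congr 1
  refine lintegral_congr_ae ?_
  filter_upwards [hF0, hFint] with x hx0 hxint
  exact ofReal_integral_eq_lintegral_ofReal hxint hx0

theorem integral_integral_swap_of_nonneg [SFinite μ]
    (hF : AEStronglyMeasurable (Function.uncurry F) (μ.prod ν))
    (hF0 : ∀ᵐ x ∂μ, 0 ≤ᵐ[ν] F x) (hF0' : ∀ᵐ y ∂ν, 0 ≤ᵐ[μ] fun x => F x y)
    (hFint : ∀ᵐ x ∂μ, Integrable (F x) ν) (hFint' : ∀ᵐ y ∂ν, Integrable (fun x => F x y) μ) :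
    ∫ x, ∫ y, F x y ∂ν ∂μ = ∫ y, ∫ x, F x y ∂μ ∂ν := by
  rw [integral_integral_eq_toReal_lintegral_prod hF hF0 hFint,
    integral_integral_eq_toReal_lintegral_prod (F := fun y x => F x y) hF.prod_swap hF0' hFint',
    ← lintegral_prod_swap]
  rfl

end Tonelli

theorem integral_rpow_mul_exp_neg_div_Ioi {P b : ℝ} (hP : 0 < P) (hb : 0 < b) :
    ∫ t in Ioi 0, t ^ (-P - 1) * exp (-(b / t)) = (1 / b) ^ P * Gamma P := by
  rw [← integral_rpow_mul_exp_neg_mul_Ioi hP hb,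
    ← integral_comp_rpow_Ioi _ (neg_ne_zero.2 one_ne_zero)]
  refine setIntegral_congr_fun measurableSet_Ioi fun t (ht : 0 < t) => ?_
  simp only [smul_eq_mul, rpow_neg_one]
  rw [inv_rpow ht.le, ← rpow_neg ht.le, div_inv_eq_mul, abs_neg, abs_one, one_mul, ← mul_assoc,
    ← rpow_add ht]
  ring_nf

theorem integrableOn_rpow_mul_exp_neg_div_Ioi {P b : ℝ} (hP : 0 < P) (hb : 0 < b) :
    IntegrableOn (fun t => t ^ (-P - 1) * exp (-(b / t))) (Ioi 0) :=
  Integrable.of_integral_ne_zero <| by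
    rw [integral_rpow_mul_exp_neg_div_Ioi hP hb]; positivity

theorem one_sub_exp_neg_div_eq_integral {a t : ℝ} (ha : 0 ≤ a) :
    1 - exp (-(a / t)) = ∫ b in Ioc 0 a, t⁻¹ * exp (-(b / t)) := by
  have hderiv (b : ℝ) : HasDerivAt (fun b => -exp (-(b / t))) (t⁻¹ * exp (-(b / t))) b := by
    have h : HasDerivAt (fun b => -(b / t)) (-t⁻¹) b := by
      simpa [div_eq_mul_inv] using ((hasDerivAt_id b).div_const t).fun_neg
    exact h.exp.fun_neg.congr_deriv (by ring)
  rw [← intervalIntegral.integral_of_le ha, intervalIntegral.integral_eq_sub_of_hasDerivAt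
    (fun b _ => hderiv b) ((by fun_prop : Continuous _).intervalIntegrable _ _)]
  simp only [zero_div, neg_zero, exp_zero]
  ring

theorem integral_Ioc_rpow_neg_half {a : ℝ} (ha : 0 ≤ a) :
    ∫ b in Ioc 0 a, b ^ (-(1 / 2) : ℝ) = 2 * √a := by
  rw [← intervalIntegral.integral_of_le ha, integral_rpow (by norm_num), sqrt_eq_rpow]
  norm_num
  ring

theorem integral_rpow_neg_half_mul_one_sub_exp_neg_div {a : ℝ} (ha : 0 ≤ a) :
    ∫ t in Ioi 0, t ^ (-(1 / 2) : ℝ) * (1 - exp (-(a / t))) = 2 * √(π * a) := by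
  set F : ℝ → ℝ → ℝ := fun t b => t ^ (-(1 / 2) - 1 : ℝ) * exp (-(b / t))
  have hF : Measurable (Function.uncurry F) := by fun_prop
  calc ∫ t in Ioi 0, t ^ (-(1 / 2) : ℝ) * (1 - exp (-(a / t)))
      = ∫ t in Ioi 0, ∫ b in Ioc 0 a, F t b := by
        refine setIntegral_congr_fun measurableSet_Ioi fun t (ht : 0 < t) => ?_
        rw [one_sub_exp_neg_div_eq_integral ha, ← integral_const_mul]
        simp only [F, rpow_sub_one ht.ne', div_eq_mul_inv, mul_assoc]
    _ = ∫ b in Ioc 0 a, ∫ t in Ioi 0, F t b := by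
        refine integral_integral_swap_of_nonneg hF.aestronglyMeasurable ?_ ?_ ?_ ?_
        · filter_upwards [ae_restrict_mem measurableSet_Ioi] with t (ht : 0 < t)
          exact Eventually.of_forall fun b => by positivity
        · refine Eventually.of_forall fun b => ?_
          filter_upwards [ae_restrict_mem measurableSet_Ioi] with t (ht : 0 < t)
          positivity
        · refine Eventually.of_forall fun t => ?_
          exact ((by fun_prop : Continuous (F t)).integrableOn_Icc).mono_set Ioc_subset_Icc_self
        · filter_upwards [ae_restrict_mem measurableSet_Ioc] with b hb
          exact integrableOn_rpow_mul_exp_neg_div_Ioi one_half_pos hb.1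
    _ = ∫ b in Ioc 0 a, √π * b ^ (-(1 / 2) : ℝ) := by
        refine setIntegral_congr_fun measurableSet_Ioc fun b hb => ?_
        rw [integral_rpow_mul_exp_neg_div_Ioi one_half_pos hb.1, Gamma_one_half_eq, one_div b,
          inv_rpow hb.1.le, ← rpow_neg hb.1.le, mul_comm]
    _ = 2 * √(π * a) := by
        rw [integral_const_mul, integral_Ioc_rpow_neg_half ha, sqrt_mul pi_pos.le]
        ring

section Gaussian

variable {V : Type*} [NormedAddCommGroup V] [InnerProductSpace ℝ V]

theorem re_cexp_neg_mul_sq_norm_add_I_mul_inner (t : ℝ) (x v : V) :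
    (Complex.exp (-t * ‖v‖ ^ 2 + Complex.I * ⟪x, v⟫)).re = cos ⟪v, x⟫ * exp (-t * ‖v‖ ^ 2) := by
  have h : (-t * ‖v‖ ^ 2 + Complex.I * ⟪x, v⟫ : ℂ)
      = ((-t * ‖v‖ ^ 2 : ℝ) : ℂ) + ⟪v, x⟫ * Complex.I := by
    rw [real_inner_comm]; push_cast; ring
  rw [h, Complex.exp_re, mul_comm]
  simp only [Complex.add_re, Complex.add_im, Complex.ofReal_re, Complex.ofReal_im,
    Complex.mul_I_re, Complex.mul_I_im, neg_zero, add_zero, zero_add]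

variable [FiniteDimensional ℝ V] [MeasurableSpace V] [BorelSpace V]

theorem integrable_cexp_neg_mul_sq_norm_add_I_mul_inner {t : ℝ} (ht : 0 < t) (x : V) :
    Integrable fun v : V => Complex.exp (-t * ‖v‖ ^ 2 + Complex.I * ⟪x, v⟫) :=
  GaussianFourier.integrable_cexp_neg_mul_sq_norm_add (b := t) (by simpa using ht) Complex.I x

theorem integrable_cos_inner_mul_exp_neg_mul_sq_norm {t : ℝ} (ht : 0 < t) (x : V) :
    Integrable fun v : V => cos ⟪v, x⟫ * exp (-t * ‖v‖ ^ 2) := by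
  simpa only [RCLike.re_to_complex, re_cexp_neg_mul_sq_norm_add_I_mul_inner] using
    (integrable_cexp_neg_mul_sq_norm_add_I_mul_inner ht x).re

theorem integral_cos_inner_mul_exp_neg_mul_sq_norm {t : ℝ} (ht : 0 < t) (x : V) :
    ∫ v : V, cos ⟪v, x⟫ * exp (-t * ‖v‖ ^ 2)
      = (π / t) ^ (Module.finrank ℝ V / 2 : ℝ) * exp (-‖x‖ ^ 2 / (4 * t)) := by
  have h := integral_re (integrable_cexp_neg_mul_sq_norm_add_I_mul_inner ht x)
  simp only [RCLike.re_to_complex, re_cexp_neg_mul_sq_norm_add_I_mul_inner] at h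
  rw [h, GaussianFourier.integral_cexp_neg_mul_sq_norm_add (b := t) (by simpa using ht),
    Complex.I_sq]
  have hpos : 0 ≤ π / t := by positivity
  have hreal : ((π / t : ℂ)) ^ (Module.finrank ℝ V / 2 : ℂ) * Complex.exp (-1 * ‖x‖ ^ 2 / (4 * t))
      = (((π / t) ^ (Module.finrank ℝ V / 2 : ℝ) * exp (-‖x‖ ^ 2 / (4 * t)) : ℝ) : ℂ) := by
    push_cast [Complex.ofReal_cpow hpos]
    ring_nf
  rw [hreal, Complex.ofReal_re]

theorem integrable_exp_neg_mul_sq_norm {t : ℝ} (ht : 0 < t) :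
    Integrable fun v : V => exp (-t * ‖v‖ ^ 2) := by
  simpa using integrable_cos_inner_mul_exp_neg_mul_sq_norm ht (0 : V)

theorem integrable_one_sub_cos_inner_mul_exp_neg_mul_sq_norm {t : ℝ} (ht : 0 < t) (x : V) :
    Integrable fun v : V => (1 - cos ⟪v, x⟫) * exp (-t * ‖v‖ ^ 2) := by
  simp_rw [sub_mul, one_mul]
  exact (integrable_exp_neg_mul_sq_norm ht).sub (integrable_cos_inner_mul_exp_neg_mul_sq_norm ht x)

theorem integral_one_sub_cos_inner_mul_exp_neg_mul_sq_norm {t : ℝ} (ht : 0 < t) (x : V) :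
    ∫ v : V, (1 - cos ⟪v, x⟫) * exp (-t * ‖v‖ ^ 2)
      = (π / t) ^ (Module.finrank ℝ V / 2 : ℝ) * (1 - exp (-‖x‖ ^ 2 / (4 * t))) := by
  simp_rw [sub_mul, one_mul]
  rw [integral_sub (integrable_exp_neg_mul_sq_norm ht)
      (integrable_cos_inner_mul_exp_neg_mul_sq_norm ht x),
    GaussianFourier.integral_rexp_neg_mul_sq_norm ht, integral_cos_inner_mul_exp_neg_mul_sq_norm ht,
    mul_one_sub]

end Gaussian

section Main

theorem inv_pow_succ_eq_integral_exp_neg_mul_sq {r : ℝ} (hr : 0 < r) (n : ℕ) :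
    (r ^ (n + 1))⁻¹ = (Gamma ((1 + n) / 2))⁻¹ *
      ∫ t in Ioi 0, t ^ ((1 + n : ℝ) / 2 - 1) * exp (-t * r ^ 2) := by
  simp_rw [neg_mul, mul_comm _ (r ^ 2)]
  rw [integral_rpow_mul_exp_neg_mul_Ioi (by positivity) (by positivity), one_div,
    inv_rpow (by positivity), ← rpow_natCast r 2, ← rpow_mul hr.le, ← rpow_natCast]
  have : 0 < Gamma ((1 + n : ℝ) / 2) := by positivity
  field_simp
  push_cast
  ring_nf

variable {V : Type*} [NormedAddCommGroup V] [InnerProductSpace ℝ V] [FiniteDimensional ℝ V]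
  [MeasurableSpace V] [BorelSpace V]

theorem integral_integral_one_sub_cos_inner_mul_rpow_mul_exp_swap (x : V) {P : ℝ} (hP : 0 < P) :
    ∫ u : V, ∫ t in Ioi 0, (1 - cos ⟪u, x⟫) * (t ^ (P - 1) * exp (-t * ‖u‖ ^ 2))
      = ∫ t in Ioi 0, ∫ u : V, (1 - cos ⟪u, x⟫) * (t ^ (P - 1) * exp (-t * ‖u‖ ^ 2)) := by
  have hcos (u : V) : 0 ≤ 1 - cos ⟪u, x⟫ := sub_nonneg.2 (cos_le_one _)
  refine integral_integral_swap_of_nonneg (by fun_prop : Measurable _).aestronglyMeasurable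
    ?_ ?_ ?_ ?_
  · refine Eventually.of_forall fun u => ?_
    filter_upwards [ae_restrict_mem measurableSet_Ioi] with t (ht : 0 < t)
    exact mul_nonneg (hcos u) (by positivity)
  · filter_upwards [ae_restrict_mem measurableSet_Ioi] with t (ht : 0 < t)
    exact Eventually.of_forall fun u => mul_nonneg (hcos u) (by positivity)
  · refine Eventually.of_forall fun u => ?_
    rcases eq_or_ne u 0 with rfl | hu
    · simp
    have h := integrableOn_rpow_mul_exp_neg_mul_rpow (by linarith : -1 < P - 1) one_pos
      (by positivity : 0 < ‖u‖ ^ 2)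
    refine Integrable.const_mul (h.congr_fun (fun t _ => ?_) measurableSet_Ioi) _
    dsimp only
    rw [rpow_one, neg_mul, neg_mul, mul_comm t]
  · filter_upwards [ae_restrict_mem measurableSet_Ioi] with t (ht : 0 < t)
    simp_rw [mul_left_comm (1 - cos _)]
    exact (integrable_one_sub_cos_inner_mul_exp_neg_mul_sq_norm ht x).const_mul _

theorem integral_one_sub_cos_inner_div_norm_pow (x : V) :
    ∫ u : V, (1 - cos ⟪u, x⟫) / ‖u‖ ^ (Module.finrank ℝ V + 1)
      = π ^ ((1 + Module.finrank ℝ V : ℝ) / 2) / Gamma ((1 + Module.finrank ℝ V : ℝ) / 2)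
        * ‖x‖ := by
  set n := Module.finrank ℝ V
  set P : ℝ := (1 + n) / 2 with hP
  set F : V → ℝ → ℝ := fun u t => (1 - cos ⟪u, x⟫) * (t ^ (P - 1) * exp (-t * ‖u‖ ^ 2))
  have hsubord (u : V) :
      (1 - cos ⟪u, x⟫) / ‖u‖ ^ (n + 1) = (Gamma P)⁻¹ * ∫ t in Ioi 0, F u t := by
    -- at `u = 0` both sides vanish, the left one because `0 / 0 = 0`
    rcases eq_or_ne u 0 with rfl | hu
    · simp [F]
    rw [div_eq_mul_inv, inv_pow_succ_eq_integral_exp_neg_mul_sq (norm_pos_iff.2 hu),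
      integral_const_mul]
    ring
  have hgauss {t : ℝ} (ht : 0 < t) :
      ∫ u, F u t = π ^ (n / 2 : ℝ) * (t ^ (-(1 / 2) : ℝ) * (1 - exp (-(‖x‖ ^ 2 / 4 / t)))) := by
    have hpow : t ^ (P - 1) / t ^ (n / 2 : ℝ) = t ^ (-(1 / 2) : ℝ) := by
      rw [← rpow_sub ht, hP]; ring_nf
    simp only [F]
    simp_rw [mul_left_comm (1 - cos _)]
    rw [integral_const_mul, integral_one_sub_cos_inner_mul_exp_neg_mul_sq_norm ht,
      div_rpow pi_pos.le ht.le, ← hpow, show -‖x‖ ^ 2 / (4 * t) = -(‖x‖ ^ 2 / 4 / t) by ring]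
    ring
  calc ∫ u : V, (1 - cos ⟪u, x⟫) / ‖u‖ ^ (n + 1)
      = (Gamma P)⁻¹ * ∫ t in Ioi 0, ∫ u, F u t := by
        simp_rw [hsubord, integral_const_mul]
        exact congrArg _
          (integral_integral_one_sub_cos_inner_mul_rpow_mul_exp_swap x (by positivity))
    _ = (Gamma P)⁻¹ * (π ^ (n / 2 : ℝ) * (2 * √(π * (‖x‖ ^ 2 / 4)))) := by
        rw [setIntegral_congr_fun measurableSet_Ioi fun t ht => hgauss ht, integral_const_mul,
          integral_rpow_neg_half_mul_one_sub_exp_neg_div (by positivity)]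
    _ = π ^ P / Gamma P * ‖x‖ := by
        have hsqrt : √(π * (‖x‖ ^ 2 / 4)) = √π * ‖x‖ / 2 := by
          rw [show π * (‖x‖ ^ 2 / 4) = (√π * ‖x‖ / 2) ^ 2 by
            rw [div_pow, mul_pow, sq_sqrt pi_pos.le]; ring, sqrt_sq (by positivity)]
        have hpi : π ^ P = π ^ (n / 2 : ℝ) * √π := by
          rw [sqrt_eq_rpow, ← rpow_add pi_pos, hP]; ring_nf
        rw [hsqrt, hpi]
        ring

end Main

theorem stmt0_general (d : ℕ) (x : EuclideanSpace ℝ (Fin d)) :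
    ∫ u : EuclideanSpace ℝ (Fin d),
      (1 - Real.cos (inner ℝ u x : ℝ)) /
        ((Real.pi ^ ((1 + (d : ℝ)) / 2) / Real.Gamma ((1 + (d : ℝ)) / 2)) * ‖u‖ ^ (d + 1))
      = ‖x‖ := by
  have hc : 0 < π ^ ((1 + (d : ℝ)) / 2) / Gamma ((1 + (d : ℝ)) / 2) := by positivity
  have h := integral_one_sub_cos_inner_div_norm_pow x
  rw [finrank_euclideanSpace_fin] at h
  simp_rw [mul_comm _ (‖_‖ ^ _), ← div_div, integral_div, h]
  field_simp

/-- For every dimension `d ≥ 1` and every `x ∈ ℝ^d`,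
`∫_{ℝ^d} (1 - cos(uᵀx)) / (c_d |u|^{d+1}) du = |x|`, where
`c_d = π^{(1+d)/2} / Γ((1+d)/2)`. -/
theorem stmt0 (d : ℕ) (hd : 1 ≤ d) (x : EuclideanSpace ℝ (Fin d)) :
    ∫ u : EuclideanSpace ℝ (Fin d),
      (1 - Real.cos (inner ℝ u x : ℝ)) /
        ((Real.pi ^ ((1 + (d : ℝ)) / 2) / Real.Gamma ((1 + (d : ℝ)) / 2)) * ‖u‖ ^ (d + 1))
      = ‖x‖ :=
  stmt0_general d x
end

section
/- Fix c ≠ 0 and define g : (0,1] → ℝ by g(t) = 2√(t/π)(e^{−c²t/2} − 1) + c t (2Φ(c√(t/2)) − 1), where Φ is the standard normal CDF. Then g(t) > 0 for all t ∈ (0,1] and g is strictly increasing on (0,1], so it attains its maximum on (0,1] uniquely at t = 1. -/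
open Real

/-- The standard normal cumulative distribution function. -/
noncomputable def stdNormalCDF (z : ℝ) : ℝ :=
  ∫ s in Set.Iic z, (2 * Real.pi) ^ (-(1 : ℝ) / 2) * Real.exp (-s ^ 2 / 2)

/-- The (rescaled) distance covariance function for Brownian motion versus Brownian motion
with linear trend `ct`. -/
noncomputable def g8 (c t : ℝ) : ℝ :=
  2 * Real.sqrt (t / Real.pi) * (Real.exp (-c ^ 2 * t / 2) - 1) +
    c * t * (2 * stdNormalCDF (c * Real.sqrt (t / 2)) - 1)

/-!
With `u = |c| √(t/2)` and `E u = ∫₀ᵘ exp (-s²/2) ds` (`gaussPrimitive`), the oddness of `E` and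
`2 Φ(z) - 1 = √(2/π) E z` turn `g8 c t` into a positive multiple of `u · H u`, where
`H u = u E u - (1 - exp (-u²))` (`gaussGap`). Since `E u ≥ u exp (-u²/2)` (the integrand
decreases on `[0, u]`),
`H' u = E u + u exp (-u²/2) - 2 u exp (-u²) ≥ 2 u (exp (-u²/2) - exp (-u²)) > 0` for `u > 0`.
So `H` increases strictly from `H 0 = 0`, hence so does `u · H u`, and `g8 c` increases strictly
from `g8 c 0 = 0` on `[0, ∞)`.
-/

open Set MeasureTheory intervalIntegral

noncomputable def gaussPrimitive (u : ℝ) : ℝ := ∫ s in (0 : ℝ)..u, exp (-s ^ 2 / 2)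

lemma continuous_exp_neg_sq_div_two : Continuous fun s : ℝ => exp (-s ^ 2 / 2) := by fun_prop

lemma integrable_exp_neg_sq_div_two : Integrable fun s : ℝ => exp (-s ^ 2 / 2) := by
  simpa [neg_div, div_eq_inv_mul] using integrable_exp_neg_mul_sq (b := 1 / 2) (by norm_num)

lemma hasDerivAt_gaussPrimitive (u : ℝ) : HasDerivAt gaussPrimitive (exp (-u ^ 2 / 2)) u :=
  (continuous_exp_neg_sq_div_two.integral_hasStrictDerivAt 0 u).hasDerivAt

lemma gaussPrimitive_neg (u : ℝ) : gaussPrimitive (-u) = -gaussPrimitive u := by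
  have h := integral_comp_neg (a := 0) (b := u) fun s => exp (-s ^ 2 / 2)
  simp only [neg_sq, neg_zero] at h
  rw [gaussPrimitive, gaussPrimitive, integral_symm, ← h]

lemma mul_exp_le_gaussPrimitive {u : ℝ} (hu : 0 ≤ u) :
    u * exp (-u ^ 2 / 2) ≤ gaussPrimitive u := by
  calc u * exp (-u ^ 2 / 2) = ∫ _ in (0 : ℝ)..u, exp (-u ^ 2 / 2) := by simp
    _ ≤ gaussPrimitive u :=
      integral_mono_on hu intervalIntegrable_const
        (continuous_exp_neg_sq_div_two.intervalIntegrable _ _)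
        fun s hs => exp_le_exp.2 (by nlinarith [hs.1, hs.2])

lemma integral_Iic_zero_exp_neg_sq_div_two :
    ∫ s in Iic (0 : ℝ), exp (-s ^ 2 / 2) = √(2 * π) / 2 := by
  rw [← neg_zero, ← integral_comp_neg_Ioi]
  convert integral_gaussian_Ioi (1 / 2) using 3 with s
  · ring_nf
  · field_simp

lemma two_mul_rpow_neg_half : 2 * (2 * π) ^ (-(1 : ℝ) / 2) = √(2 / π) := by
  rw [neg_div, rpow_neg (by positivity), ← sqrt_eq_rpow, show 2 / π = 2 ^ 2 / (2 * π) by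
    field_simp, sqrt_div' _ (by positivity), sqrt_sq zero_le_two, div_eq_mul_inv]

lemma two_mul_stdNormalCDF_sub_one (z : ℝ) :
    2 * stdNormalCDF z - 1 = √(2 / π) * gaussPrimitive z := by
  have hint : Integrable fun s : ℝ => (2 * π) ^ (-(1 : ℝ) / 2) * exp (-s ^ 2 / 2) :=
    integrable_exp_neg_sq_div_two.const_mul _
  have hsplit := integral_Iic_sub_Iic (a := 0) (b := z) hint.integrableOn hint.integrableOn
  rw [MeasureTheory.integral_const_mul, MeasureTheory.integral_const_mul,
    intervalIntegral.integral_const_mul, integral_Iic_zero_exp_neg_sq_div_two] at hsplit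
  rw [← two_mul_rpow_neg_half, gaussPrimitive, stdNormalCDF, MeasureTheory.integral_const_mul]
  have hC : (2 * π) ^ (-(1 : ℝ) / 2) * √(2 * π) = 1 := by
    rw [neg_div, rpow_neg (by positivity), ← sqrt_eq_rpow, inv_mul_cancel₀ (by positivity)]
  linear_combination 2 * hsplit + hC

noncomputable def gaussGap (u : ℝ) : ℝ := u * gaussPrimitive u - (1 - exp (-u ^ 2))

lemma gaussGap_zero : gaussGap 0 = 0 := by simp [gaussGap]

lemma hasDerivAt_gaussGap (u : ℝ) :
    HasDerivAt gaussGap (gaussPrimitive u + u * exp (-u ^ 2 / 2) - 2 * u * exp (-u ^ 2)) u := by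
  have hexp : HasDerivAt (fun u : ℝ => exp (-u ^ 2)) (exp (-u ^ 2) * -(2 * u)) u := by
    simpa using (hasDerivAt_pow 2 u).neg.exp
  exact (((hasDerivAt_id' u).fun_mul (hasDerivAt_gaussPrimitive u)).fun_sub
    (hexp.const_sub 1)).congr_deriv (by ring)

lemma gaussGap_strictMonoOn : StrictMonoOn gaussGap (Ici 0) := by
  refine strictMonoOn_of_deriv_pos (convex_Ici 0)
    (fun u _ => (hasDerivAt_gaussGap u).continuousAt.continuousWithinAt) fun u hu => ?_
  rw [interior_Ici, mem_Ioi] at hu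
  rw [(hasDerivAt_gaussGap u).deriv]
  have hexp : exp (-u ^ 2) < exp (-u ^ 2 / 2) := exp_lt_exp.2 (by nlinarith)
  nlinarith [mul_exp_le_gaussPrimitive hu.le]

lemma gaussGap_pos {u : ℝ} (hu : 0 < u) : 0 < gaussGap u := by
  simpa [gaussGap_zero] using gaussGap_strictMonoOn self_mem_Ici hu.le hu

lemma strictMonoOn_mul_gaussGap : StrictMonoOn (fun u => u * gaussGap u) (Ici 0) := by
  intro a ha b hb hab
  have hb' : 0 < b := lt_of_le_of_lt ha hab
  calc a * gaussGap a ≤ a * gaussGap b :=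
        mul_le_mul_of_nonneg_left (gaussGap_strictMonoOn.monotoneOn ha hb hab.le) ha
    _ < b * gaussGap b := mul_lt_mul_of_pos_right hab (gaussGap_pos hb')

lemma g8_eq_mul_gaussGap {c t : ℝ} (hc : c ≠ 0) (ht : 0 ≤ t) :
    g8 c t = 2 * √(2 / π) / |c| * (|c| * √(t / 2) * gaussGap (|c| * √(t / 2))) := by
  set r := √(t / 2) with hr
  have hr2 : r ^ 2 = t / 2 := sq_sqrt (by positivity)
  have hodd : c * gaussPrimitive (c * r) = |c| * gaussPrimitive (|c| * r) := by
    rcases abs_cases c with ⟨habs, -⟩ | ⟨habs, -⟩ <;> rw [habs]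
    rw [neg_mul c r, gaussPrimitive_neg, neg_mul_neg]
  have hsqrt : √(t / π) = √(2 / π) * r := by
    rw [hr, ← sqrt_mul (by positivity)]
    congr 1
    field_simp
  have hexp : exp (-c ^ 2 * t / 2) = exp (-(|c| * r) ^ 2) := by
    rw [mul_pow, sq_abs, hr2]
    ring_nf
  rw [g8, gaussGap, two_mul_stdNormalCDF_sub_one, hsqrt, hexp, mul_assoc (|c|),
    ← mul_assoc _ (|c|), div_mul_cancel₀ _ (abs_ne_zero.2 hc)]
  linear_combination
    (2 * √(2 / π) * r ^ 2) * hodd - (2 * √(2 / π) * c * gaussPrimitive (c * r)) * hr2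

lemma g8_zero (c : ℝ) : g8 c 0 = 0 := by simp [g8]

lemma g8_strictMonoOn {c : ℝ} (hc : c ≠ 0) : StrictMonoOn (g8 c) (Ici 0) := by
  intro s hs t ht hst
  rw [g8_eq_mul_gaussGap hc hs, g8_eq_mul_gaussGap hc ht]
  have hu : |c| * √(s / 2) < |c| * √(t / 2) :=
    mul_lt_mul_of_pos_left (sqrt_lt_sqrt (by linarith [mem_Ici.1 hs]) (by linarith))
      (abs_pos.2 hc)
  exact mul_lt_mul_of_pos_left
    (strictMonoOn_mul_gaussGap (mem_Ici.2 (by positivity)) (mem_Ici.2 (by positivity)) hu)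
    (by positivity)

/-- For `c ≠ 0`, `g8 c` is positive and strictly increasing on `(0,1]`, hence attains its
maximum on `(0,1]` uniquely at `t = 1`. -/
theorem stmt8 (c : ℝ) (hc : c ≠ 0) :
    (∀ t ∈ Set.Ioc (0 : ℝ) 1, 0 < g8 c t) ∧
      StrictMonoOn (g8 c) (Set.Ioc 0 1) ∧
      ∀ t ∈ Set.Ioc (0 : ℝ) 1, t ≠ 1 → g8 c t < g8 c 1 := by
  have hmono := g8_strictMonoOn hc
  refine ⟨fun t ht => ?_, hmono.mono fun t ht => mem_Ici.2 ht.1.le, fun t ht hne => ?_⟩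
  · simpa [g8_zero] using hmono self_mem_Ici (mem_Ici.2 ht.1.le) ht.1
  · exact hmono (mem_Ici.2 ht.1.le) (mem_Ici.2 zero_le_one) (lt_of_le_of_ne ht.2 hne)
end
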